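/- Let X be a measurable space, D a probability measure on X, and f, k : X → {0,1} measurable functions. Let D^Y := f_*D and D^Ŷ := k_*D be the pushforward measures on {0,1}. Then d_JS(D^Y, D^Ŷ) ≤ √( E_{x∼D}[|f(x) − k(x)|] ). -/

import Mathlib

/-!
The density `g = dμ/dm` of `μ` with respect to the midpoint `m = (μ + ν)/2` is at most `2`, and on
`[0, 2]` one has `t log t ≤ 2 (t - 1)⁺`. Integrating against `m` gives
`KL(μ‖m) ≤ 2 (μ A - m A) = μ A - ν A` with `A = {g > 1}`, so both Kullback–Leibler terms of the
Jensen–Shannon divergence are bounded by the total variation distance of `μ` and `ν`. For the laws of `f` and `k`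
under `D` that distance is at most `D {f ≠ k}`, which equals `E |f - k|` for `{0,1}`-valued maps.
-/

open MeasureTheory Real
open scoped ENNReal

/-- The Kullback–Leibler divergence `KL(μ‖ν) = ∫ log(dμ/dν) dμ` (real-valued;
this is the correct value whenever `μ ≪ ν`, as is the case below where the
second argument is the midpoint measure). -/
noncomputable def klReal {Ω : Type*} [MeasurableSpace Ω] (μ ν : Measure Ω) : ℝ :=
  ∫ x, llr μ ν x ∂μ

/-- The Jensen–Shannon divergence
`D_JS(μ‖ν) := (1/2)·KL(μ‖m) + (1/2)·KL(ν‖m)` with `m := (μ + ν)/2`. -/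
noncomputable def jsDiv {Ω : Type*} [MeasurableSpace Ω] (μ ν : Measure Ω) : ℝ :=
  (1 / 2) * klReal μ ((2 : ℝ≥0∞)⁻¹ • (μ + ν)) + (1 / 2) * klReal ν ((2 : ℝ≥0∞)⁻¹ • (μ + ν))

/-- The Jensen–Shannon distance `d_JS(μ,ν) := √(D_JS(μ‖ν))`. -/
noncomputable def jsDist {Ω : Type*} [MeasurableSpace Ω] (μ ν : Measure Ω) : ℝ :=
  Real.sqrt (jsDiv μ ν)

lemma mul_log_le_two_mul_max_sub_one {t : ℝ} (h0 : 0 ≤ t) (h2 : t ≤ 2) :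
    t * log t ≤ 2 * max (t - 1) 0 := by
  rcases le_or_gt t 1 with h1 | h1
  · nlinarith [mul_nonneg h0 (neg_nonneg.mpr (log_nonpos h0 h1)), le_max_right (t - 1) 0]
  · nlinarith [log_le_sub_one_of_pos (by linarith : 0 < t), le_max_left (t - 1) 0]

lemma abs_mul_log_le_two {t : ℝ} (h0 : 0 ≤ t) (h2 : t ≤ 2) : |t * log t| ≤ 2 := by
  have hlow : t - 1 ≤ t * log t := by
    have := InformationTheory.klFun_nonneg h0
    rw [InformationTheory.klFun_apply] at this
    linarith
  have hmax : max (t - 1) 0 ≤ 1 := max_le (by linarith) zero_le_one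
  exact abs_le.mpr ⟨by linarith, by linarith [mul_log_le_two_mul_max_sub_one h0 h2]⟩

lemma MeasureTheory.Measure.rnDeriv_le_of_le_smul {Ω : Type*} [MeasurableSpace Ω]
    {μ ν : Measure Ω} [SigmaFinite ν] {c : ℝ≥0∞} (h : μ ≤ c • ν) :
    μ.rnDeriv ν ≤ᵐ[ν] fun _ ↦ c := by
  refine ae_le_of_forall_setLIntegral_le_of_sigmaFinite (μ.measurable_rnDeriv ν) fun s _ _ ↦ ?_
  rw [setLIntegral_const]
  exact (Measure.setLIntegral_rnDeriv_le s).trans (h s)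

section Midpoint

variable {Ω : Type*} [MeasurableSpace Ω] {μ ν : Measure Ω}

lemma le_two_smul_midpoint : μ ≤ (2 : ℝ≥0∞) • (2 : ℝ≥0∞)⁻¹ • (μ + ν) := by
  rw [smul_smul, ENNReal.mul_inv_cancel two_ne_zero ENNReal.ofNat_ne_top, one_smul]
  exact Measure.le_add_right le_rfl

lemma absolutelyContinuous_midpoint : μ ≪ (2 : ℝ≥0∞)⁻¹ • (μ + ν) :=
  (Measure.absolutelyContinuous_of_le (Measure.le_add_right le_rfl)).trans
    (Measure.absolutelyContinuous_smul (by norm_num))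

variable [IsFiniteMeasure μ] [IsFiniteMeasure ν]

lemma klReal_midpoint_le {c : ℝ} (h : ∀ A, MeasurableSet A → μ.real A - ν.real A ≤ c) :
    klReal μ ((2 : ℝ≥0∞)⁻¹ • (μ + ν)) ≤ c := by
  set m := (2 : ℝ≥0∞)⁻¹ • (μ + ν)
  have : IsFiniteMeasure m := (μ + ν).smul_finite (by simp)
  set g : Ω → ℝ := fun x ↦ (μ.rnDeriv m x).toReal
  have hg : Measurable g := (μ.measurable_rnDeriv m).ennreal_toReal
  have hg2 : ∀ᵐ x ∂m, g x ≤ 2 := by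
    filter_upwards [Measure.rnDeriv_le_of_le_smul le_two_smul_midpoint] with x hx
    simpa using ENNReal.toReal_mono ENNReal.ofNat_ne_top hx
  set A := {x | 1 < g x}
  have hA : MeasurableSet A := measurableSet_lt measurable_const hg
  have hmax :
      (fun x ↦ 2 * max (g x - 1) 0) = fun x ↦ 2 * A.indicator (fun x ↦ g x - 1) x := by
    ext x
    by_cases hx : 1 < g x
    · simp [A, hx, hx.le]
    · simp [A, hx, not_lt.mp hx]
  have hkl : klReal μ m = ∫ x, g x * log (g x) ∂m :=
    (integral_rnDeriv_smul absolutelyContinuous_midpoint).symm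
  have hint : Integrable (fun x ↦ g x * log (g x)) m := by
    refine Integrable.mono' (integrable_const 2) (by fun_prop) ?_
    filter_upwards [hg2] with x hx
    exact abs_mul_log_le_two ENNReal.toReal_nonneg hx
  calc klReal μ m ≤ ∫ x, 2 * max (g x - 1) 0 ∂m := by
        rw [hkl]
        refine integral_mono_ae hint ?_ ?_
        · exact ((Measure.integrable_toReal_rnDeriv.sub (integrable_const 1)).pos_part).const_mul 2
        · filter_upwards [hg2] with x hx
          exact mul_log_le_two_mul_max_sub_one ENNReal.toReal_nonneg hx
    _ = 2 * (μ.real A - m.real A) := by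
        rw [hmax, integral_const_mul, integral_indicator hA,
          integral_sub Measure.integrable_toReal_rnDeriv.integrableOn
            (integrable_const 1).integrableOn,
          Measure.setIntegral_toReal_rnDeriv absolutelyContinuous_midpoint]
        simp
    _ = μ.real A - ν.real A := by
        rw [measureReal_ennreal_smul_apply, measureReal_add_apply]
        simp only [ENNReal.toReal_inv, ENNReal.toReal_ofNat]
        ring
    _ ≤ c := h A hA

end Midpoint

lemma map_measureReal_sub_le_measureReal_ne {α β : Type*} [MeasurableSpace α]
    [MeasurableSpace β] (P : Measure α) [IsFiniteMeasure P] {f k : α → β} (hf : Measurable f)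
    (hk : Measurable k) {A : Set β} (hA : MeasurableSet A) :
    (P.map f).real A - (P.map k).real A ≤ P.real {x | f x ≠ k x} := by
  have hsub : f ⁻¹' A ⊆ k ⁻¹' A ∪ {x | f x ≠ k x} := by
    intro x hx
    by_cases hfk : f x = k x
    · exact Or.inl (by simpa [Set.mem_preimage, ← hfk] using hx)
    · exact Or.inr hfk
  rw [map_measureReal_apply hf hA, map_measureReal_apply hk hA]
  linarith [measureReal_mono (μ := P) hsub,
    measureReal_union_le (μ := P) (k ⁻¹' A) {x | f x ≠ k x}]

lemma integral_abs_sub_eq_measureReal_ne {α : Type*} [MeasurableSpace α] (P : Measure α)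
    {f k : α → ℝ} (hf : Measurable f) (hk : Measurable k)
    (hf01 : ∀ x, f x = 0 ∨ f x = 1) (hk01 : ∀ x, k x = 0 ∨ k x = 1) :
    ∫ x, |f x - k x| ∂P = P.real {x | f x ≠ k x} := by
  have hind : (fun x ↦ |f x - k x|) = {x | f x ≠ k x}.indicator 1 := by
    ext x
    rcases hf01 x with hfx | hfx <;> rcases hk01 x with hkx | hkx <;> simp [hfx, hkx]
  rw [hind]
  exact integral_indicator_one (measurableSet_eq_fun hf hk).compl

theorem stmt_8 {X : Type*} [MeasurableSpace X]
    (D : Measure X) [IsProbabilityMeasure D]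
    (f k : X → ℝ) (hf : Measurable f) (hk : Measurable k)
    (hfr : ∀ x, f x = 0 ∨ f x = 1) (hkr : ∀ x, k x = 0 ∨ k x = 1) :
    jsDist (Measure.map f D) (Measure.map k D) ≤
      Real.sqrt (∫ x, |f x - k x| ∂D) := by
  rw [jsDist, integral_abs_sub_eq_measureReal_ne D hf hk hfr hkr]
  refine Real.sqrt_le_sqrt ?_
  have hμ := klReal_midpoint_le fun A hA ↦ map_measureReal_sub_le_measureReal_ne D hf hk hA
  have hν := klReal_midpoint_le (μ := D.map k) (ν := D.map f) fun A hA ↦ by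
    simpa only [ne_comm] using map_measureReal_sub_le_measureReal_ne D hk hf hA
  rw [add_comm] at hν
  rw [jsDiv]
  linarith
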